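/- Let A : U → Ũ and C : ℝ^{r,s} → ℝ^{s,r} satisfy A^τ J̃_z A = J_{C^τ(z)} for all z, with C C^τ = C^τ C = −Id and r ≠ s. Then for any orthonormal vectors z_1, z_2 of ℝ^{r,s}: A^τ A commutes with J_{z_1} J_{z_2}, i.e. A^τ A J_{z_1} J_{z_2} = J_{z_1} J_{z_2} A^τ A. -/

import Mathlib

/-- The standard pseudo-Euclidean bilinear form of signature `(r, n - r)` on `ℝⁿ`. -/
noncomputable def stdForm (n r : ℕ) : LinearMap.BilinForm ℝ (Fin n → ℝ) :=
  Matrix.toBilin' (Matrix.diagonal fun i : Fin n => if (i : ℕ) < r then (1 : ℝ) else -1)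

/-! Write `T = Aτ A` and, for `z` of norm `±1`, transport `J'(-C z)` to `U`:
`K_z = A⁻¹ J'(-C z) A`. Then `T K_z = J_z` by the relation (as `Cτ (-C z) = z`), and
`K_z² = ⟨z, z⟩` because `C` reverses the sign of the norm. Hence `(T K_z)² = J_z² = -K_z²`,
and cancelling the invertible `K_z` gives `T K_z T = -K_z`. Both
`T (T K₁)(T K₂)` and `(T K₁)(T K₂) T` then reduce to `-T K₁ K₂`. -/

theorem LinearMap.IsAdjointPair.apply_self_eq_neg_of_comp_eq_neg_id
    {R M M₁ : Type*} [CommRing R] [AddCommGroup M] [Module R M] [AddCommGroup M₁] [Module R M₁]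
    {B : LinearMap.BilinForm R M} {B' : LinearMap.BilinForm R M₁}
    {f : M →ₗ[R] M₁} {g : M₁ →ₗ[R] M} (h : LinearMap.IsAdjointPair B B' f g)
    (hgf : g ∘ₗ f = -LinearMap.id) (x : M) :
    B' (f x) (f x) = -B x x := by
  have hx : g (f x) = -x := by simpa using LinearMap.congr_fun hgf x
  rw [h, hx, map_neg]

theorem isUnit_of_mul_self_eq_smul_one {𝕜 R : Type*} [Field 𝕜] [Ring R] [Algebra 𝕜 R]
    {K : R} {c : 𝕜} (hc : c ≠ 0) (h : K * K = c • 1) : IsUnit K :=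
  ⟨⟨K, c⁻¹ • K,
    by rw [mul_smul_comm, h, smul_smul, inv_mul_cancel₀ hc, one_smul],
    by rw [smul_mul_assoc, h, smul_smul, inv_mul_cancel₀ hc, one_smul]⟩, rfl⟩

section Ring

variable {R : Type*} [Ring R]

theorem IsUnit.mul_mul_eq_neg_of_mul_self_eq_neg_mul_self {T K : R} (hK : IsUnit K)
    (h : T * K * (T * K) = -(K * K)) : T * K * T = -K :=
  hK.mul_right_cancel (by simpa only [mul_assoc, neg_mul] using h)

theorem commute_mul_mul_of_mul_mul_eq_neg {T K₁ K₂ : R}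
    (h₁ : T * K₁ * T = -K₁) (h₂ : T * K₂ * T = -K₂) :
    Commute T (T * K₁ * (T * K₂)) :=
  calc T * (T * K₁ * (T * K₂)) = T * (T * K₁ * T) * K₂ := by noncomm_ring
    _ = T * K₁ * (T * K₂ * T) := by rw [h₁, h₂]; noncomm_ring
    _ = T * K₁ * (T * K₂) * T := by noncomm_ring

end Ring

theorem AtauA_commutes_with_even_product_general
    {U W : Type*}
    [AddCommGroup U] [Module ℝ U]
    [AddCommGroup W] [Module ℝ W]
    (n r s : ℕ)
    (J : (Fin n → ℝ) →ₗ[ℝ] Module.End ℝ U)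
    (hJ : ∀ z, J z * J z = -(stdForm n r z z) • (1 : Module.End ℝ U))
    (J' : (Fin n → ℝ) →ₗ[ℝ] Module.End ℝ W)
    (hJ' : ∀ w, J' w * J' w = -(stdForm n s w w) • (1 : Module.End ℝ W))
    (A : U →ₗ[ℝ] W) (hA : Function.Bijective A)
    (C : (Fin n → ℝ) →ₗ[ℝ] (Fin n → ℝ))
    (Aτ : W →ₗ[ℝ] U)
    (Cτ : (Fin n → ℝ) →ₗ[ℝ] (Fin n → ℝ))
    (hCτ : ∀ z w : Fin n → ℝ, stdForm n s (C z) w = stdForm n r z (Cτ w))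
    (hrel : ∀ w : Fin n → ℝ,
      (Aτ ∘ₗ (J' w : W →ₗ[ℝ] W) ∘ₗ A : U →ₗ[ℝ] U) = J (Cτ w))
    (hCτC : Cτ ∘ₗ C = -LinearMap.id)
    (z₁ z₂ : Fin n → ℝ)
    (hz₁ : stdForm n r z₁ z₁ = 1 ∨ stdForm n r z₁ z₁ = -1)
    (hz₂ : stdForm n r z₂ z₂ = 1 ∨ stdForm n r z₂ z₂ = -1) :
    (Aτ ∘ₗ A : Module.End ℝ U) * (J z₁ * J z₂) =
      (J z₁ * J z₂) * (Aτ ∘ₗ A : Module.End ℝ U) := by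
  set T : Module.End ℝ U := Aτ ∘ₗ A
  let e := LinearEquiv.ofBijective A hA
  let K : (Fin n → ℝ) → Module.End ℝ U := fun z => e.symm.conjAlgEquiv ℝ (J' (-C z))
  have hCτC_apply : ∀ z, Cτ (-C z) = z := fun z => by
    simpa using LinearMap.congr_fun hCτC (-z)
  have hTK : ∀ z, T * K z = J z := fun z => by
    have hJz : J z = Aτ ∘ₗ J' (-C z) ∘ₗ A := by rw [hrel, hCτC_apply]
    rw [hJz]
    ext x
    simp [T, K, e]
  have hKK : ∀ z, K z * K z = stdForm n r z z • 1 := fun z => by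
    have hform := LinearMap.IsAdjointPair.apply_self_eq_neg_of_comp_eq_neg_id hCτ hCτC z
    rw [← map_mul, hJ']
    simp only [map_neg, LinearMap.neg_apply, neg_neg, hform, map_smul, map_one]
  have hTKT : ∀ z, (stdForm n r z z = 1 ∨ stdForm n r z z = -1) → T * K z * T = -K z := by
    intro z hz
    have hc : stdForm n r z z ≠ 0 := by rcases hz with h | h <;> simp [h]
    refine (isUnit_of_mul_self_eq_smul_one hc (hKK z)).mul_mul_eq_neg_of_mul_self_eq_neg_mul_self ?_
    rw [hTK, hJ, hKK, neg_smul]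
  rw [← hTK z₁, ← hTK z₂]
  exact (commute_mul_mul_of_mul_mul_eq_neg (hTKT z₁ hz₁) (hTKT z₂ hz₂)).eq

/-- Under the isomorphism relation `Aᵀ J̃_z A = J_{Cᵀ z}` with
`C Cᵀ = Cᵀ C = -Id` and `r ≠ s`, for any orthonormal `z₁, z₂` of `ℝ^{r,s}` the operator
`Aᵀ A` commutes with `J_{z₁} J_{z₂}`. -/
theorem AtauA_commutes_with_even_product
    {U W : Type*}
    [AddCommGroup U] [Module ℝ U] [FiniteDimensional ℝ U]
    [AddCommGroup W] [Module ℝ W] [FiniteDimensional ℝ W]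
    (n r s : ℕ) (hn : r + s = n) (hrs : r ≠ s)
    (BU : LinearMap.BilinForm ℝ U) (hBUnd : BU.Nondegenerate)
    (hBUsymm : ∀ x y : U, BU x y = BU y x)
    (BW : LinearMap.BilinForm ℝ W) (hBWnd : BW.Nondegenerate)
    (hBWsymm : ∀ x y : W, BW x y = BW y x)
    (J : (Fin n → ℝ) →ₗ[ℝ] Module.End ℝ U)
    (hJ : ∀ z, J z * J z = -(stdForm n r z z) • (1 : Module.End ℝ U))
    (hJskew : ∀ (z : Fin n → ℝ) (x y : U), BU (J z x) y + BU x (J z y) = 0)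
    (J' : (Fin n → ℝ) →ₗ[ℝ] Module.End ℝ W)
    (hJ' : ∀ w, J' w * J' w = -(stdForm n s w w) • (1 : Module.End ℝ W))
    (hJ'skew : ∀ (w : Fin n → ℝ) (x y : W), BW (J' w x) y + BW x (J' w y) = 0)
    (A : U →ₗ[ℝ] W) (hA : Function.Bijective A)
    (C : (Fin n → ℝ) →ₗ[ℝ] (Fin n → ℝ)) (hC : Function.Bijective C)
    (Aτ : W →ₗ[ℝ] U) (hAτ : ∀ (x : U) (y : W), BW (A x) y = BU x (Aτ y))
    (Cτ : (Fin n → ℝ) →ₗ[ℝ] (Fin n → ℝ))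
    (hCτ : ∀ z w : Fin n → ℝ, stdForm n s (C z) w = stdForm n r z (Cτ w))
    (hrel : ∀ w : Fin n → ℝ,
      (Aτ ∘ₗ (J' w : W →ₗ[ℝ] W) ∘ₗ A : U →ₗ[ℝ] U) = J (Cτ w))
    (hCCτ : C ∘ₗ Cτ = -LinearMap.id) (hCτC : Cτ ∘ₗ C = -LinearMap.id)
    (z₁ z₂ : Fin n → ℝ)
    (hz₁ : stdForm n r z₁ z₁ = 1 ∨ stdForm n r z₁ z₁ = -1)
    (hz₂ : stdForm n r z₂ z₂ = 1 ∨ stdForm n r z₂ z₂ = -1)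
    (hz₁₂ : stdForm n r z₁ z₂ = 0) :
    (Aτ ∘ₗ A : Module.End ℝ U) * (J z₁ * J z₂) =
      (J z₁ * J z₂) * (Aτ ∘ₗ A : Module.End ℝ U) :=
  AtauA_commutes_with_even_product_general n r s J hJ J' hJ' A hA C Aτ Cτ hCτ hrel hCτC z₁ z₂ hz₁
    hz₂
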